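/- arXiv:1503.07562 — 3 statements merged into one kernel-verified Lean document; each statement's English description precedes it below -/
import Mathlib

section
/- Let V be a finite-dimensional real vector space, W a vector space with nondegenerate symmetric bilinear form c, and E = V ⊕ W ⊕ V* with pairing ⟨X+r+ξ, Y+t+η⟩ = (η(X)+ξ(Y))/2 + c(r,t). Any linear map f of E preserving the pairing, satisfying π∘f = π (where π: E → V is projection) and acting as the identity on the W-component modulo V*, is of the form (B,a) for unique B ∈ Λ²V*, a ∈ Hom(V,W), where (B,a)(X+r+ξ) = X + (a(X)+r) + (ξ + ι_X B − c(a(X),a(·)) − 2c(a(·),r)). -/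
namespace Statement3

variable (V W : Type*) [AddCommGroup V] [Module ℝ V] [AddCommGroup W] [Module ℝ W]

/-- The pairing on `E = V ⊕ W ⊕ V*`:  `⟨X+r+ξ, Y+t+η⟩ = (η(X)+ξ(Y))/2 + c(r,t)`. -/
noncomputable def pairing (c : W →ₗ[ℝ] W →ₗ[ℝ] ℝ)
    (e e' : V × W × Module.Dual ℝ V) : ℝ :=
  (e'.2.2 e.1 + e.2.2 e'.1) / 2 + c e.2.1 e'.2.1

/-- The transformation `(B,a)` of `E = V ⊕ W ⊕ V*`:
`X+r+ξ ↦ X + (a(X)+r) + (ξ + ι_X B − c(a(X),a(·)) − 2c(a(·),r))`. -/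
noncomputable def transf (c : W →ₗ[ℝ] W →ₗ[ℝ] ℝ) (B : V →ₗ[ℝ] V →ₗ[ℝ] ℝ) (a : V →ₗ[ℝ] W)
    (e : V × W × Module.Dual ℝ V) : V × W × Module.Dual ℝ V :=
  (e.1, a e.1 + e.2.1,
    e.2.2 + B e.1 - c.compl₁₂ a a e.1 - (2 : ℝ) • ((c.compl₁₂ a LinearMap.id).flip e.2.1))

/-- any linear orthogonal transformation `f` of `E = V ⊕ W ⊕ V*` that is
compatible with the anchor (`π∘f = π`) and acts as the identity on the `W`-component modulo
`V*` is of the form `(B,a)` for unique `B ∈ Λ²V*` (an alternating bilinear form) and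
`a ∈ Hom(V,W)`. -/
theorem statement3
    (c : W →ₗ[ℝ] W →ₗ[ℝ] ℝ)
    (hsym : ∀ w w', c w w' = c w' w)
    (hnondeg : ∀ w : W, (∀ w', c w w' = 0) → w = 0)
    (f : (V × W × Module.Dual ℝ V) →ₗ[ℝ] (V × W × Module.Dual ℝ V))
    (horth : ∀ e e', pairing V W c (f e) (f e') = pairing V W c e e')
    (hanchor : ∀ e, (f e).1 = e.1)
    (hW : ∀ r : W, (f (0, r, 0)).2.1 = r) :
    ∃! Ba : (V →ₗ[ℝ] V →ₗ[ℝ] ℝ) × (V →ₗ[ℝ] W),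
      (∀ x, Ba.1 x x = 0) ∧ ∀ e, f e = transf V W c Ba.1 Ba.2 e := by
  classical
  -- components of f on V
  set a : V →ₗ[ℝ] W :=
    (LinearMap.fst ℝ W (Module.Dual ℝ V)) ∘ₗ (LinearMap.snd ℝ V (W × Module.Dual ℝ V)) ∘ₗ
      f ∘ₗ LinearMap.inl ℝ V (W × Module.Dual ℝ V) with haDef
  set k : V →ₗ[ℝ] Module.Dual ℝ V :=
    (LinearMap.snd ℝ W (Module.Dual ℝ V)) ∘ₗ (LinearMap.snd ℝ V (W × Module.Dual ℝ V)) ∘ₗ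
      f ∘ₗ LinearMap.inl ℝ V (W × Module.Dual ℝ V) with hkDef
  set B : V →ₗ[ℝ] V →ₗ[ℝ] ℝ := k + c.compl₁₂ a a with hBDef
  have ha : ∀ X : V, (f (X, (0 : W × Module.Dual ℝ V))).2.1 = a X := fun _ => rfl
  have hk : ∀ X : V, (f (X, (0 : W × Module.Dual ℝ V))).2.2 = k X := fun _ => rfl
  -- f fixes V* pointwise (in W-component it's 0)
  have hWz : ∀ ξ : Module.Dual ℝ V, (f (0, 0, ξ)).2.1 = 0 := by
    intro ξ
    refine hnondeg _ fun r => ?_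
    have h := horth (0, 0, ξ) (0, r, 0)
    simp [pairing, hanchor, hW] at h
    exact h
  have hDz : ∀ ξ : Module.Dual ℝ V, (f (0, 0, ξ)).2.2 = ξ := by
    intro ξ
    ext Y
    have h := horth (0, 0, ξ) (Y, 0, 0)
    simp [pairing, hanchor, hWz, ha] at h
    linarith
  have hfξ : ∀ ξ : Module.Dual ℝ V, f (0, 0, ξ) = (0, 0, ξ) := by
    intro ξ
    have h1 := hanchor ((0 : V), (0 : W), ξ)
    exact Prod.ext h1 (Prod.ext (hWz ξ) (hDz ξ))
  -- third component of f on W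
  have hh : ∀ (r : W) (Y : V), (f (0, r, 0)).2.2 Y = -(2 * c (a Y) r) := by
    intro r Y
    have h := horth (Y, 0, 0) (0, r, 0)
    simp [pairing, hanchor, hW, ha, Prod.mk_zero_zero] at h
    linarith
  -- B is alternating
  have hBalt : ∀ X : V, B X X = 0 := by
    intro X
    have h := horth (X, 0, 0) (X, 0, 0)
    simp [pairing, hanchor, ha, hk, Prod.mk_zero_zero] at h
    simp [hBDef, LinearMap.compl₁₂_apply]
    linarith
  have hmain : ∀ e, f e = transf V W c B a e := by
    rintro ⟨X, r, ξ⟩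
    have hdec : ((X, r, ξ) : V × W × Module.Dual ℝ V)
        = (X, 0, 0) + (0, r, 0) + (0, 0, ξ) := by
      simp [Prod.ext_iff]
    refine Prod.ext (hanchor _) (Prod.ext ?_ ?_)
    · rw [hdec, map_add, map_add, hfξ]
      simp [transf, ha, hW, Prod.mk_zero_zero]
    · ext Y
      rw [hdec, map_add, map_add, hfξ]
      simp only [Prod.snd_add, Prod.fst_add, LinearMap.add_apply, hk, transf,
        LinearMap.sub_apply, LinearMap.smul_apply, LinearMap.compl₁₂_apply,
        LinearMap.flip_apply, LinearMap.id_coe, id_eq, smul_eq_mul, hBDef, hh,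
        LinearMap.zero_apply, add_zero, zero_add, map_zero, Prod.mk_zero_zero]
      ring
  refine ⟨(B, a), ⟨hBalt, hmain⟩, ?_⟩
  rintro ⟨B', a'⟩ ⟨halt', hmain'⟩
  have ha' : a' = a := by
    ext X
    have h := (hmain' (X, 0, 0)).symm.trans (hmain (X, 0, 0))
    have h2 := congrArg (fun e => e.2.1) h
    simpa [transf] using h2
  subst ha'
  have hB' : B' = B := by
    ext X Y
    have h := (hmain' (X, 0, 0)).symm.trans (hmain (X, 0, 0))
    have h2 := congrArg (fun e => e.2.2 Y) h
    simp [transf, LinearMap.compl₁₂_apply] at h2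
    linarith
  rw [hB']


end Statement3
end

section
/- Let E be a Courant algebroid over M with anchor π, pairing ⟨·,·⟩ and Dorfman bracket [·,·], and let V₊ ⊂ E be a generalized metric with orthogonal complement V₋ and projections Π_±, and C an endomorphism with C(V₊)⊆V₋, C(V₋)⊆V₊ as constructed from an admissible metric. Then the Gualtieri–Bismut operator D^B_e e' = [e₋,e'₊]₊ + [e₊,e'₋]₋ + [Ce₋,e'₋]₋ + [Ce₊,e'₊]₊ is C^∞(M)-linear in e: D^B_{φe} e' = φ D^B_e e' for all φ ∈ C^∞(M), and satisfies the Leibniz rule D^B_e(φe') = φ D^B_e e' + π(e)(φ) e'. -/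
namespace Statement11

/-- let `E` be (the sections of) a Courant algebroid over `M`, with anchor
action `an e : C^∞(M) → C^∞(M)`, Dorfman bracket `br`, pairing `ip`, generalized metric
with projections `Pp, Pm` onto `V₊, V₋`, and `C` an endomorphism swapping `V₊` and `V₋`
compatible with the anchor.  Then the Gualtieri–Bismut operator
`D^B_e e' = [e₋,e'₊]₊ + [e₊,e'₋]₋ + [Ce₋,e'₋]₋ + [Ce₊,e'₊]₊`
is `C^∞(M)`-linear in `e` and satisfies the Leibniz rule in `e'`.

The hypotheses are the consequences of the Courant algebroid axioms (D3), (D4), (D5)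
recorded in the context:  `[e,φe'] = π(e)(φ)e' + φ[e,e']` and
`[φa,b] = φ[a,b] − π(b)(φ)a + 2⟨a,b⟩π*dφ`, together with the orthogonality of `V₊` and
`V₋` and the properties of `C`. -/
theorem statement11
    (C E : Type*) [CommRing C] [AddCommGroup E] [Module C E]
    (br : E → E → E)                   -- Dorfman bracket
    (an : E → C → C)                   -- anchor action π(e)(φ)
    (ip : E → E → C)                   -- the pairing ⟨·,·⟩
    (Dd : C → E)                       -- φ ↦ π*(dφ)
    (Pp Pm : E →ₗ[C] E)                -- projections Π₊, Π₋
    (Cmap : E →ₗ[C] E)                 -- the endomorphism C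
    (hsum : ∀ e, Pp e + Pm e = e)
    (hPpPm : ∀ e, Pp (Pm e) = 0) (hPmPp : ∀ e, Pm (Pp e) = 0)
    (hCpm : ∀ e, Pm (Cmap (Pm e)) = 0)     -- C(V₋) ⊆ V₊
    (hCpp : ∀ e, Pp (Cmap (Pp e)) = 0)     -- C(V₊) ⊆ V₋
    (hanC : ∀ e φ, an (Cmap e) φ = an e φ)  -- π ∘ C ∘ Π_± = π ∘ Π_±
    (han_add : ∀ a b φ, an (a + b) φ = an a φ + an b φ)
    (hD3 : ∀ e φ e', br e (φ • e') = an e φ • e' + φ • br e e')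
    (hD35 : ∀ φ a b, br (φ • a) b = φ • br a b - an b φ • a + (2 * ip a b) • Dd φ)
    (horthmp : ∀ e e', ip (Pm e) (Pp e') = 0)
    (horthpm : ∀ e e', ip (Pp e) (Pm e') = 0)
    (DB : E → E → E)
    (hDB : ∀ e e', DB e e' =
      Pp (br (Pm e) (Pp e')) + Pm (br (Pp e) (Pm e'))
        + Pm (br (Cmap (Pm e)) (Pm e')) + Pp (br (Cmap (Pp e)) (Pp e'))) :
    (∀ (φ : C) (e e' : E), DB (φ • e) e' = φ • DB e e') ∧
    (∀ (φ : C) (e e' : E), DB e (φ • e') = φ • DB e e' + an e φ • e') := by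
  have hPpidem : ∀ e, Pp (Pp e) = Pp e := by
    intro e
    have h := congrArg Pp (hsum e)
    simpa [map_add, hPpPm] using h
  have hPmidem : ∀ e, Pm (Pm e) = Pm e := by
    intro e
    have h := congrArg Pm (hsum e)
    simpa [map_add, hPmPp] using h
  have hCm : ∀ e, Cmap (Pm e) = Pp (Cmap (Pm e)) := by
    intro e
    conv_lhs => rw [← hsum (Cmap (Pm e))]
    rw [hCpm e, add_zero]
  have hCp : ∀ e, Cmap (Pp e) = Pm (Cmap (Pp e)) := by
    intro e
    conv_lhs => rw [← hsum (Cmap (Pp e))]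
    rw [hCpp e, zero_add]
  have hip1 : ∀ e e', ip (Cmap (Pm e)) (Pm e') = 0 := by
    intro e e'; rw [hCm e]; exact horthpm _ _
  have hip2 : ∀ e e', ip (Cmap (Pp e)) (Pp e') = 0 := by
    intro e e'
    conv_lhs => rw [hCp e]
    exact horthmp _ _
  constructor
  · intro φ e e'
    rw [hDB, hDB]
    simp only [map_smul, hD35, map_add, map_sub, hPpPm, hPmPp, hCpm, hCpp,
      horthmp, horthpm, hip1, hip2, mul_zero, zero_smul, map_zero, smul_zero,
      sub_zero, add_zero, smul_add]
  · intro φ e e'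
    rw [hDB, hDB]
    simp only [map_smul, hD3, map_add, hPpidem, hPmidem, smul_add, hanC]
    have hs : an (Pm e) φ • Pp e' + an (Pp e) φ • Pm e'
        + an (Pm e) φ • Pm e' + an (Pp e) φ • Pp e' = an e φ • e' := by
      have h1 : an (Pm e) φ • Pp e' + an (Pm e) φ • Pm e' = an (Pm e) φ • e' := by
        rw [← smul_add, hsum]
      have h2 : an (Pp e) φ • Pm e' + an (Pp e) φ • Pp e' = an (Pp e) φ • e' := by
        rw [← smul_add, add_comm (Pm e') (Pp e'), hsum]
      calc an (Pm e) φ • Pp e' + an (Pp e) φ • Pm e'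
            + an (Pm e) φ • Pm e' + an (Pp e) φ • Pp e'
          = (an (Pm e) φ • Pp e' + an (Pm e) φ • Pm e')
            + (an (Pp e) φ • Pm e' + an (Pp e) φ • Pp e') := by abel
        _ = an (Pm e) φ • e' + an (Pp e) φ • e' := by rw [h1, h2]
        _ = (an (Pm e) φ + an (Pp e) φ) • e' := by rw [add_smul]
        _ = an e φ • e' := by
            rw [← han_add]
            rw [add_comm (Pm e) (Pp e), hsum]
    rw [← hs]
    abel


end Statement11
end

section
/- Let G be a group acting on the right on a set P, with Ω²_cl an abelian group (closed 2-forms) and suppose for each g ∈ AutP we are given a^g := g⁻¹·θ − θ ∈ Ω¹(adP) for a fixed connection θ. Then the product (g,B)(g',B') := (gg', ǧ'*B + B' + c((g'⁻¹·a^g) ∧ a^{g'})) defines a group structure on pairs {(g,B)} (where ǧ denotes the diffeomorphism covered by g), i.e. it is associative with identity (Id,0) and inverses, given the cocycle property a^{gg'} = g'⁻¹·a^g + a^{g'}. -/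
/-! The pairs form an extension of `G` by the `G`-module `Ω`, twisted by the 2-cochain
`(g, g') ↦ c (g'⁻¹·a^g) (a^{g'})`. This is a 2-cocycle: expanding `a^{gg'}` by the cocycle
property of `a` and pulling `ǧ''*` through `c` by equivariance, its cocycle identity reduces to
biadditivity of `c`. The cocycle property of `a` also gives `a^1 = 0` and
`g⁻¹·a^g = -a^{g⁻¹}`, which yield the identity `(1, 0)` and the inverse of `(g, B)`. -/

namespace Statement18

section TwistedProduct

variable {G Ω A : Type*} [Group G] [AddCommGroup Ω] [AddCommGroup A]
  (ρ : G → Ω →+ Ω) (R : G → A →+ A) (c : A →+ A →+ Ω) (a : G → A)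

def twistedMul (p q : G × Ω) : G × Ω :=
  (p.1 * q.1, ρ q.1 p.2 + q.2 + c (R q.1 (a p.1)) (a q.1))

def twistedInv (p : G × Ω) : G × Ω :=
  (p.1⁻¹, -ρ p.1⁻¹ p.2 - c (R p.1⁻¹ (a p.1)) (a p.1⁻¹))

variable {ρ R c a}

theorem cocycle_one (hR_one : R 1 = AddMonoidHom.id A)
    (hcocycle : ∀ g g', a (g * g') = R g' (a g) + a g') : a 1 = 0 := by
  simpa [hR_one] using hcocycle 1 1

theorem act_inv_cocycle (ha : a 1 = 0) (hcocycle : ∀ g g', a (g * g') = R g' (a g) + a g')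
    (g : G) : R g⁻¹ (a g) = -a g⁻¹ := by
  rw [eq_neg_iff_add_eq_zero, ← hcocycle, mul_inv_cancel, ha]

theorem twistedMul_assoc (hρ_mul : ∀ g g' B, ρ (g * g') B = ρ g' (ρ g B))
    (hR_mul : ∀ g g' α, R (g * g') α = R g' (R g α))
    (hc_equiv : ∀ g α β, ρ g (c α β) = c (R g α) (R g β))
    (hcocycle : ∀ g g', a (g * g') = R g' (a g) + a g') (p q r : G × Ω) :
    twistedMul ρ R c a (twistedMul ρ R c a p q) r =
      twistedMul ρ R c a p (twistedMul ρ R c a q r) := by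
  refine Prod.ext (mul_assoc _ _ _) ?_
  simp only [twistedMul, map_add, AddMonoidHom.add_apply, hcocycle, hc_equiv, ← hR_mul,
    ← hρ_mul]
  abel

theorem one_twistedMul (ha : a 1 = 0) (p : G × Ω) : twistedMul ρ R c a (1, 0) p = p := by
  simp [twistedMul, ha]

theorem twistedMul_one (hρ_one : ρ 1 = AddMonoidHom.id Ω) (ha : a 1 = 0) (p : G × Ω) :
    twistedMul ρ R c a p (1, 0) = p := by
  simp [twistedMul, ha, hρ_one]

theorem twistedMul_twistedInv (p : G × Ω) :
    twistedMul ρ R c a p (twistedInv ρ R c a p) = (1, 0) :=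
  Prod.ext (mul_inv_cancel _) (by simp only [twistedMul, twistedInv]; abel)

theorem twistedInv_twistedMul (hρ_one : ρ 1 = AddMonoidHom.id Ω)
    (hρ_mul : ∀ g g' B, ρ (g * g') B = ρ g' (ρ g B)) (hR_one : R 1 = AddMonoidHom.id A)
    (hR_mul : ∀ g g' α, R (g * g') α = R g' (R g α))
    (hc_equiv : ∀ g α β, ρ g (c α β) = c (R g α) (R g β))
    (hcocycle : ∀ g g', a (g * g') = R g' (a g) + a g') (p : G × Ω) :
    twistedMul ρ R c a (twistedInv ρ R c a p) p = (1, 0) := by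
  have ha := cocycle_one hR_one hcocycle
  have hinv (g : G) : R g (a g⁻¹) = -a g := by
    simpa using act_inv_cocycle ha hcocycle g⁻¹
  refine Prod.ext (inv_mul_cancel _) ?_
  simp only [twistedMul, twistedInv, map_sub, map_neg, hc_equiv, ← hρ_mul, ← hR_mul,
    inv_mul_cancel, hρ_one, hR_one, AddMonoidHom.id_apply, hinv, AddMonoidHom.neg_apply]
  abel

end TwistedProduct

theorem statement18_general
    (G : Type*) [Group G]
    (Ω : Type*) [AddCommGroup Ω]
    (A : Type*) [AddCommGroup A]
    (ρ : G → (Ω →+ Ω))                  -- pullback action on closed 2-forms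
    (hρ_one : ρ 1 = AddMonoidHom.id Ω)
    (hρ_mul : ∀ g g' (B : Ω), ρ (g * g') B = ρ g' (ρ g B))
    (R : G → (A →+ A))                  -- the action `g⁻¹ · (-)` on adP-valued 1-forms
    (hR_one : R 1 = AddMonoidHom.id A)
    (hR_mul : ∀ g g' (α : A), R (g * g') α = R g' (R g α))
    (c : A → A → Ω)                     -- the pairing `c(· ∧ ·)`
    (hc_addl : ∀ α α' β, c (α + α') β = c α β + c α' β)
    (hc_addr : ∀ α β β', c α (β + β') = c α β + c α β')
    (hc_equiv : ∀ g α β, ρ g (c α β) = c (R g α) (R g β))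
    (a : G → A)                          -- `a^g = g⁻¹·θ − θ`
    (hcocycle : ∀ g g', a (g * g') = R g' (a g) + a g') :
    -- the product on pairs
    ∀ mul : (G × Ω) → (G × Ω) → (G × Ω),
      (∀ p q : G × Ω, mul p q = (p.1 * q.1, ρ q.1 p.2 + q.2 + c (R q.1 (a p.1)) (a q.1))) →
      -- associativity
      (∀ p q r, mul (mul p q) r = mul p (mul q r)) ∧
      -- identity
      (∀ p, mul (1, 0) p = p ∧ mul p (1, 0) = p) ∧
      -- inverses
      (∀ p, ∃ q, mul p q = (1, 0) ∧ mul q p = (1, 0)) := by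
  intro mul hmul
  let cHom : A →+ A →+ Ω :=
    AddMonoidHom.mk' (fun α ↦ AddMonoidHom.mk' (c α) (hc_addr α))
      fun α α' ↦ AddMonoidHom.ext (hc_addl α α')
  obtain rfl : mul = twistedMul ρ R cHom a := funext₂ hmul
  have ha := cocycle_one hR_one hcocycle
  exact ⟨twistedMul_assoc hρ_mul hR_mul hc_equiv hcocycle,
    fun p ↦ ⟨one_twistedMul ha p, twistedMul_one hρ_one ha p⟩,
    fun p ↦ ⟨twistedInv ρ R cHom a p, twistedMul_twistedInv p,
      twistedInv_twistedMul hρ_one hρ_mul hR_one hR_mul hc_equiv hcocycle p⟩⟩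

/-- let `G = Aut P`, let `Ω²_cl` be the abelian group of closed 2-forms with
the (contravariant) pullback action `ρ g = ǧ*`, let `A = Ω¹(adP)` with the (contravariant)
action `R g = g⁻¹·(-)`, let `c` be the equivariant antisymmetric pairing
`c(· ∧ ·) : A × A → Ω²_cl`, and let `a : G → A`, `a^g = g⁻¹·θ − θ`, satisfy the cocycle
property `a^{gg'} = g'⁻¹·a^g + a^{g'}`.  Then the product
`(g,B)(g',B') = (gg', ǧ'*B + B' + c((g'⁻¹·a^g) ∧ a^{g'}))`
is associative, has identity `(1,0)`, and has inverses — i.e. it defines a group structure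
on the set of pairs `{(g,B)}`. -/
theorem statement18
    (G : Type*) [Group G]
    (Ω : Type*) [AddCommGroup Ω]
    (A : Type*) [AddCommGroup A]
    (ρ : G → (Ω →+ Ω))                  -- pullback action on closed 2-forms
    (hρ_one : ρ 1 = AddMonoidHom.id Ω)
    (hρ_mul : ∀ g g' (B : Ω), ρ (g * g') B = ρ g' (ρ g B))
    (R : G → (A →+ A))                  -- the action `g⁻¹ · (-)` on adP-valued 1-forms
    (hR_one : R 1 = AddMonoidHom.id A)
    (hR_mul : ∀ g g' (α : A), R (g * g') α = R g' (R g α))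
    (c : A → A → Ω)                     -- the pairing `c(· ∧ ·)`
    (hc_addl : ∀ α α' β, c (α + α') β = c α β + c α' β)
    (hc_addr : ∀ α β β', c α (β + β') = c α β + c α β')
    (hc_anti : ∀ α β, c α β = - c β α)
    (hc_equiv : ∀ g α β, ρ g (c α β) = c (R g α) (R g β))
    (a : G → A)                          -- `a^g = g⁻¹·θ − θ`
    (hcocycle : ∀ g g', a (g * g') = R g' (a g) + a g') :
    -- the product on pairs
    ∀ mul : (G × Ω) → (G × Ω) → (G × Ω),
      (∀ p q : G × Ω, mul p q = (p.1 * q.1, ρ q.1 p.2 + q.2 + c (R q.1 (a p.1)) (a q.1))) →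
      -- associativity
      (∀ p q r, mul (mul p q) r = mul p (mul q r)) ∧
      -- identity
      (∀ p, mul (1, 0) p = p ∧ mul p (1, 0) = p) ∧
      -- inverses
      (∀ p, ∃ q, mul p q = (1, 0) ∧ mul q p = (1, 0)) :=
  statement18_general G Ω A ρ hρ_one hρ_mul R hR_one hR_mul c hc_addl hc_addr hc_equiv a hcocycle

end Statement18
end
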